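/- Let V be a complex inner product space with orthonormal basis e₁,…,e_n, let v₁,…,v_k ∈ V be pairwise orthogonal nonzero vectors, and let a = (a₁,…,a_k) be nonnegative integers with a₁+⋯+a_k = n. Then |∑_{r ∼ a} ⟨e₁, v_{r(1)}⟩ ⋯ ⟨e_n, v_{r(n)}⟩|² ≤ (‖v₁‖^{2a₁} ⋯ ‖v_k‖^{2a_k}) / (a₁^{a₁} ⋯ a_k^{a_k}). -/

import Mathlib

/-!
Put `ρⱼ = √aⱼ / ‖vⱼ‖`. For unimodular `u : Fin k → ℂ` the vector `w = ∑ⱼ uⱼ ρⱼ vⱼ` has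
`‖w‖² = ∑ⱼ aⱼ = n` by orthogonality, so Bessel's inequality and AM-GM give
`|∏ᵢ ⟨eᵢ, w⟩| ≤ 1`. Expanded, `∏ᵢ ⟨eᵢ, w⟩` is a polynomial in `u` whose coefficient of
`u₁^{a₁} ⋯ u_k^{a_k}` is `(∏ⱼ ρⱼ^{aⱼ}) S`, where `S` is the sum in question. Averaging against
`u^{-a}` over a grid of roots of unity extracts this coefficient (a discrete Cauchy estimate),
so `(∏ⱼ ρⱼ^{aⱼ}) |S| ≤ 1`, which is the claim.
-/

open Finset RCLike

theorem Real.prod_le_sum_div_card_pow {ι : Type*} (s : Finset ι) {z : ι → ℝ}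
    (hz : ∀ i ∈ s, 0 ≤ z i) : ∏ i ∈ s, z i ≤ ((∑ i ∈ s, z i) / #s) ^ #s := by
  rcases s.eq_empty_or_nonempty with rfl | hs
  · simp
  have hcard : (#s : ℝ) ≠ 0 := by exact_mod_cast hs.card_pos.ne'
  have hprod : 0 ≤ ∏ i ∈ s, z i := prod_nonneg hz
  have amgm := Real.geom_mean_le_arith_mean_weighted s (fun _ ↦ (#s : ℝ)⁻¹) z
    (fun _ _ ↦ by positivity) (by simp [hcard]) hz
  rw [Real.finsetProd_rpow s z hz, ← mul_sum, inv_mul_eq_div] at amgm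
  calc ∏ i ∈ s, z i = ((∏ i ∈ s, z i) ^ (#s : ℝ)⁻¹) ^ #s :=
        (Real.rpow_inv_natCast_pow hprod hs.card_pos.ne').symm
    _ ≤ ((∑ i ∈ s, z i) / #s) ^ #s := by gcongr

section InnerProduct

variable {𝕜 E ι : Type*} [RCLike 𝕜] [NormedAddCommGroup E] [InnerProductSpace 𝕜 E] [Fintype ι]

theorem Orthonormal.norm_prod_inner_sq_le {b : ι → E} (hb : Orthonormal 𝕜 b) (w : E) :
    ‖∏ i, inner 𝕜 (b i) w‖ ^ 2 ≤ (‖w‖ ^ 2 / Fintype.card ι) ^ Fintype.card ι := by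
  rw [norm_prod, ← prod_pow]
  calc ∏ i, ‖inner 𝕜 (b i) w‖ ^ 2
      ≤ ((∑ i, ‖inner 𝕜 (b i) w‖ ^ 2) / Fintype.card ι) ^ Fintype.card ι :=
        Real.prod_le_sum_div_card_pow univ fun _ _ ↦ by positivity
    _ ≤ (‖w‖ ^ 2 / Fintype.card ι) ^ Fintype.card ι := by
        gcongr
        exact hb.sum_inner_products_le w

theorem Orthonormal.norm_prod_inner_le_one {b : ι → E} (hb : Orthonormal 𝕜 b) {w : E}
    (hw : ‖w‖ ^ 2 = Fintype.card ι) : ‖∏ i, inner 𝕜 (b i) w‖ ≤ 1 := by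
  have hsq := hb.norm_prod_inner_sq_le w
  rw [hw] at hsq
  have hle : ((Fintype.card ι : ℝ) / Fintype.card ι) ^ Fintype.card ι ≤ 1 :=
    pow_le_one₀ (by positivity) (div_self_le_one _)
  exact (pow_le_one_iff_of_nonneg (norm_nonneg _) two_ne_zero).mp (hsq.trans hle)

theorem prod_inner_sum_smul {κ : Type*} [DecidableEq ι] [Fintype κ] (b : ι → E) (v : κ → E)
    (t : κ → 𝕜) :
    ∏ i, inner 𝕜 (b i) (∑ j, t j • v j)
      = ∑ r : ι → κ, ∏ i, t (r i) * inner 𝕜 (b i) (v (r i)) := by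
  simp_rw [inner_sum, inner_smul_right, Fintype.prod_sum]

theorem norm_sum_smul_sq_of_pairwise_inner_eq_zero {v : ι → E}
    (hv : Pairwise fun i j ↦ inner 𝕜 (v i) (v j) = 0) (t : ι → 𝕜) :
    ‖∑ i, t i • v i‖ ^ 2 = ∑ i, ‖t i‖ ^ 2 * ‖v i‖ ^ 2 := by
  apply ofReal_injective (K := 𝕜)
  push_cast
  rw [← inner_self_eq_norm_sq_to_K, sum_inner]
  refine sum_congr rfl fun i _ ↦ ?_
  have hoff : ∀ j ≠ i, inner 𝕜 (t i • v i) (t j • v j) = 0 := fun j hji ↦ by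
    simp [inner_smul_left, inner_smul_right, hv hji.symm]
  rw [inner_sum, sum_eq_single i (fun j _ ↦ hoff j) (by simp), inner_smul_left,
    inner_smul_right, inner_self_eq_norm_sq_to_K, ← mul_assoc, RCLike.conj_mul]

end InnerProduct

theorem Fintype.prod_comp_eq_prod_pow_card_fiber {ι κ M : Type*} [Fintype ι] [Fintype κ]
    [DecidableEq κ] [CommMonoid M] (f : κ → M) (g : ι → κ) :
    ∏ i, f (g i) = ∏ j, f j ^ #{i | g i = j} := by
  rw [← Finset.prod_fiberwise' univ g f]
  simp_rw [prod_const]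

theorem IsPrimitiveRoot.sum_pow_div_pow_eq_ite {K : Type*} [Field K] {ω : K} {N : ℕ}
    (hω : IsPrimitiveRoot ω N) {c d : ℕ} (hc : c < N) (hd : d < N) :
    ∑ x : Fin N, (ω ^ (x : ℕ)) ^ c / (ω ^ (x : ℕ)) ^ d = if c = d then (N : K) else 0 := by
  have hω0 : ω ≠ 0 := hω.ne_zero (by omega)
  simp_rw [← pow_mul, mul_comm _ c, mul_comm _ d, pow_mul, ← div_pow]
  rw [Fin.sum_univ_eq_sum_range (fun x ↦ (ω ^ c / ω ^ d) ^ x)]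
  split_ifs with hcd
  · simp [hcd, hω0]
  have hq : ω ^ c / ω ^ d ≠ 1 := fun h ↦
    hcd (hω.pow_inj hc hd ((div_eq_one_iff_eq (pow_ne_zero _ hω0)).mp h))
  have hqN : (ω ^ c / ω ^ d) ^ N = 1 := by
    rw [div_pow, pow_right_comm, hω.pow_eq_one, one_pow, pow_right_comm, hω.pow_eq_one,
      one_pow, div_one]
  rw [geom_sum_eq hq, hqN, sub_self, zero_div]

section FiberCard

variable {ι κ : Type*} [Fintype ι] [Fintype κ] [DecidableEq κ]

theorem IsPrimitiveRoot.sum_prod_div_prod_pow_eq_ite {K : Type*} [Field K] {ω : K} {N : ℕ}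
    (hω : IsPrimitiveRoot ω N) (r : ι → κ) {a : κ → ℕ} (hr : ∀ j, #{i | r i = j} < N)
    (ha : ∀ j, a j < N) :
    ∑ m : κ → Fin N, (∏ i, ω ^ (m (r i) : ℕ)) / ∏ j, (ω ^ (m j : ℕ)) ^ a j
      = if ∀ j, #{i | r i = j} = a j then (N : K) ^ Fintype.card κ else 0 := by
  calc _ = ∑ m : κ → Fin N, ∏ j, (ω ^ (m j : ℕ)) ^ #{i | r i = j} / (ω ^ (m j : ℕ)) ^ a j := by
        refine sum_congr rfl fun m _ ↦ ?_
        rw [Fintype.prod_comp_eq_prod_pow_card_fiber (fun j ↦ ω ^ (m j : ℕ)) r, prod_div_distrib]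
    _ = ∏ j, ∑ x : Fin N, (ω ^ (x : ℕ)) ^ #{i | r i = j} / (ω ^ (x : ℕ)) ^ a j :=
        (Fintype.prod_sum fun j (x : Fin N) ↦
          (ω ^ (x : ℕ)) ^ #{i | r i = j} / (ω ^ (x : ℕ)) ^ a j).symm
    _ = _ := by
        simp_rw [hω.sum_pow_div_pow_eq_ite (hr _) (ha _), Fintype.prod_ite_zero, prod_const,
          card_univ]

theorem norm_sum_filter_fiber_card_eq_le [DecidableEq ι] (c : (ι → κ) → ℂ) (a : κ → ℕ)
    [DecidablePred fun r : ι → κ ↦ ∀ j, #{i | r i = j} = a j] {M : ℝ}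
    (hM : ∀ u : κ → ℂ, (∀ j, ‖u j‖ = 1) → ‖∑ r, (∏ i, u (r i)) * c r‖ ≤ M) :
    ‖∑ r with ∀ j, #{i | r i = j} = a j, c r‖ ≤ M := by
  -- any `N` exceeding all the exponents `#{i | r i = j}` and `a j` will do
  obtain ⟨N, hN⟩ : ∃ N, N = Fintype.card ι + ∑ j, a j + 1 := ⟨_, rfl⟩
  have hN0 : N ≠ 0 := by omega
  have hω : IsPrimitiveRoot (Complex.exp (2 * Real.pi * Complex.I / N)) N :=
    Complex.isPrimitiveRoot_exp N hN0
  generalize Complex.exp (2 * Real.pi * Complex.I / N) = ω at hω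
  have hr : ∀ (r : ι → κ) j, #{i | r i = j} < N := fun r j ↦ by
    have := card_le_univ {i | r i = j}
    omega
  have ha : ∀ j, a j < N := fun j ↦ by
    have := single_le_sum (fun j _ ↦ (a j).zero_le) (mem_univ j)
    omega
  have hunit : ∀ (m : κ → Fin N) j, ‖ω ^ (m j : ℕ)‖ = 1 := fun m j ↦ by
    rw [norm_pow, hω.norm'_eq_one hN0, one_pow]
  have hextract :
      ∑ m : κ → Fin N, (∑ r, (∏ i, ω ^ (m (r i) : ℕ)) * c r) / ∏ j, (ω ^ (m j : ℕ)) ^ a j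
        = (N : ℂ) ^ Fintype.card κ * ∑ r with ∀ j, #{i | r i = j} = a j, c r := by
    simp_rw [sum_div, mul_div_right_comm _ (c _)]
    rw [sum_comm]
    simp_rw [← sum_mul, hω.sum_prod_div_prod_pow_eq_ite _ (hr _) ha, mul_sum, sum_filter, ite_mul,
      zero_mul]
  refine le_of_mul_le_mul_left ?_ (by positivity : (0 : ℝ) < (N : ℝ) ^ Fintype.card κ)
  calc (N : ℝ) ^ Fintype.card κ * ‖∑ r with ∀ j, #{i | r i = j} = a j, c r‖
      = ‖∑ m : κ → Fin N,
          (∑ r, (∏ i, ω ^ (m (r i) : ℕ)) * c r) / ∏ j, (ω ^ (m j : ℕ)) ^ a j‖ := by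
        rw [hextract, norm_mul, norm_pow, Complex.norm_natCast]
    _ ≤ ∑ m : κ → Fin N,
          ‖(∑ r, (∏ i, ω ^ (m (r i) : ℕ)) * c r) / ∏ j, (ω ^ (m j : ℕ)) ^ a j‖ :=
        norm_sum_le _ _
    _ ≤ ∑ _m : κ → Fin N, M := by
        refine sum_le_sum fun m _ ↦ ?_
        rw [norm_div, norm_prod]
        simp only [norm_pow, hunit, one_pow, prod_const_one, div_one]
        exact hM (fun j ↦ ω ^ (m j : ℕ)) (hunit m)
    _ = (N : ℝ) ^ Fintype.card κ * M := by simp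

theorem sum_filter_fiber_card_eq_prod_comp_mul {R : Type*} [CommSemiring R] [DecidableEq ι]
    (a : κ → ℕ) [DecidablePred fun r : ι → κ ↦ ∀ j, #{i | r i = j} = a j] (ρ : κ → R)
    (f : (ι → κ) → R) :
    ∑ r with ∀ j, #{i | r i = j} = a j, (∏ i, ρ (r i)) * f r
      = (∏ j, ρ j ^ a j) * ∑ r with ∀ j, #{i | r i = j} = a j, f r := by
  rw [mul_sum]
  refine sum_congr rfl fun r hr ↦ ?_
  rw [Fintype.prod_comp_eq_prod_pow_card_fiber ρ r]
  simp only [(mem_filter.mp hr).2]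

end FiberCard

open Finset in
open Classical in
/-- For an orthonormal basis `e₁,…,eₙ`, pairwise orthogonal nonzero vectors
`v₁,…,v_k`, and nonnegative integers `a₁+⋯+a_k = n`:
`|∑_{r ∼ a} ⟨e₁, v_{r 1}⟩ ⋯ ⟨eₙ, v_{r n}⟩|² ≤ ∏ᵢ ‖vᵢ‖^{2aᵢ} / ∏ᵢ aᵢ^{aᵢ}`. -/
theorem stmt_12 {V : Type*} [NormedAddCommGroup V] [InnerProductSpace ℂ V]
    {n k : ℕ} (b : Module.Basis (Fin n) ℂ V) (he : Orthonormal ℂ b)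
    (v : Fin k → V) (hv : ∀ i j, i ≠ j → (inner ℂ (v i) (v j) : ℂ) = 0)
    (hv0 : ∀ i, v i ≠ 0) (a : Fin k → ℕ) (ha : ∑ i, a i = n) :
    ‖∑ r ∈ Finset.univ.filter
          (fun r : Fin n → Fin k =>
            ∀ i, (Finset.univ.filter fun x => r x = i).card = a i),
        ∏ i, (inner ℂ (b i) (v (r i)) : ℂ)‖ ^ 2
      ≤ (∏ i, ‖v i‖ ^ (2 * a i)) / ∏ i, (a i : ℝ) ^ (a i) := by
  set ρ : Fin k → ℝ := fun j ↦ √(a j) / ‖v j‖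
  have hρv : ∀ j, ρ j ^ 2 * ‖v j‖ ^ 2 = a j := fun j ↦ by
    rw [div_pow, Real.sq_sqrt (Nat.cast_nonneg _), div_mul_cancel₀ _ (by simpa using hv0 j)]
  have hP : 0 < ∏ j, ρ j ^ a j := prod_pos fun j _ ↦ by
    rcases (a j).eq_zero_or_pos with h | h
    · simp [h]
    · exact pow_pos (div_pos (by positivity) (norm_pos_iff.mpr (hv0 j))) _
  have hbound := norm_sum_filter_fiber_card_eq_le
    (fun r ↦ (∏ i, (ρ (r i) : ℂ)) * ∏ i, inner ℂ (b i) (v (r i))) a (M := 1) fun u hu ↦ by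
      have hw : ‖∑ j, (u j * ρ j) • v j‖ ^ 2 = Fintype.card (Fin n) := by
        rw [norm_sum_smul_sq_of_pairwise_inner_eq_zero hv]
        simp [hu, hρv, ← ha]
      simpa only [prod_inner_sum_smul, ← prod_mul_distrib, mul_assoc]
        using he.norm_prod_inner_le_one hw
  rw [sum_filter_fiber_card_eq_prod_comp_mul a (fun j ↦ (ρ j : ℂ)), norm_mul] at hbound
  simp_rw [← Complex.ofReal_pow, ← Complex.ofReal_prod, Complex.norm_real,
    Real.norm_of_nonneg hP.le] at hbound
  have hvpos : 0 < ∏ j, ‖v j‖ ^ (2 * a j) :=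
    prod_pos fun j _ ↦ pow_pos (norm_pos_iff.mpr (hv0 j)) _
  have hP2 : (∏ j, ρ j ^ a j) ^ 2 * ∏ j, ‖v j‖ ^ (2 * a j) = ∏ j, (a j : ℝ) ^ a j := by
    rw [← prod_pow, ← prod_mul_distrib]
    refine prod_congr rfl fun j _ ↦ ?_
    rw [← hρv, ← pow_mul, pow_mul', mul_comm 2, pow_mul', ← mul_pow]
  rw [← hP2, div_mul_cancel_right₀ hvpos.ne', ← one_div, le_div_iff₀ (by positivity), ← mul_pow,
    mul_comm]
  exact pow_le_one₀ (by positivity) hbound
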